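/- Let 0 < δ ≤ 1/2, γ > 0, and define σ : [0,1] → ℝ by σ(z) = −γ for z ∈ [0,δ] ∪ [1−δ, 1] and σ(z) = 0 otherwise. Let w, θ be complex-valued functions on [0,1], with w twice continuously differentiable, θ continuously differentiable, and w(0) = w(1) = 0, w'(0) = w'(1) = 0. Then for all real a₁ > 0, a₂ > 0, k > 0: ∫₀¹ 2·σ(z)·Re( w(z)·conj(θ(z)) ) dz ≥ −(γ·δ²/(2√2))·[ a₁·∫₀¹ |w'|² + (1/a₁)·∫₀¹ |θ'|² + (a₂/k²)·∫₀¹ |w''|² + (k²/a₂)·∫₀¹ |θ|² ]. -/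

import Mathlib

/-!
On the layer `[0, δ]`, `w 0 = w' 0 = 0` and the Cauchy–Schwarz inequality applied twice to the
fundamental theorem of calculus give `‖w z‖² ≤ z³/2 · ∫₀^δ ‖w''‖²`, hence
`∫₀^δ ‖w‖² ≤ δ⁴/8 · ∫₀^δ ‖w''‖²`; the layer at `z = 1` follows by reflection. Since `σ` vanishes
between the layers, Young's inequality `2‖w‖‖θ‖ ≤ C t ‖θ‖² + (C t)⁻¹ ‖w‖²` with `t = k²/a₂` and
`C = δ²/(2√2)`, so that `C² = δ⁴/8`, bounds the cross term by the `θ` and `w''` terms alone.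
-/

open Set intervalIntegral
open MeasureTheory (volume)

lemma two_mul_le_mul_sq_add_inv_mul_sq {ε : ℝ} (hε : 0 < ε) (x y : ℝ) :
    2 * x * y ≤ ε * x ^ 2 + ε⁻¹ * y ^ 2 := by
  have h : ε * x ^ 2 + ε⁻¹ * y ^ 2 - 2 * x * y = ε⁻¹ * (ε * x - y) ^ 2 := by
    field_simp
    ring
  rw [← sub_nonneg, h]
  positivity

section

variable {a b : ℝ}

lemma integral_two_mul_le_of_continuousOn (hab : a ≤ b) {f g : ℝ → ℝ}
    (hf : ContinuousOn f (Icc a b)) (hg : ContinuousOn g (Icc a b)) {ε : ℝ} (hε : 0 < ε) :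
    ∫ x in a..b, 2 * f x * g x ≤ ε * (∫ x in a..b, f x ^ 2) + ε⁻¹ * ∫ x in a..b, g x ^ 2 := by
  have hint : ∀ {h : ℝ → ℝ}, ContinuousOn h (Icc a b) → IntervalIntegrable h volume a b :=
    fun hh => hh.intervalIntegrable_of_Icc hab
  calc ∫ x in a..b, 2 * f x * g x ≤ ∫ x in a..b, (ε * f x ^ 2 + ε⁻¹ * g x ^ 2) :=
        integral_mono_on hab (hint (by fun_prop)) (hint (by fun_prop))
          fun x _ => two_mul_le_mul_sq_add_inv_mul_sq hε _ _
    _ = ε * (∫ x in a..b, f x ^ 2) + ε⁻¹ * ∫ x in a..b, g x ^ 2 := by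
        rw [integral_add (hint (by fun_prop)) (hint (by fun_prop)), integral_const_mul,
          integral_const_mul]

lemma sq_integral_le_mul_integral_sq (hab : a ≤ b) {f : ℝ → ℝ} (hf : ContinuousOn f (Icc a b)) :
    (∫ x in a..b, f x) ^ 2 ≤ (b - a) * ∫ x in a..b, f x ^ 2 := by
  rcases hab.eq_or_lt with rfl | hlt
  · simp
  set I := ∫ x in a..b, f x
  -- Young's inequality against the constant function `I`, with weight `b - a`.
  have hL : 0 < b - a := sub_pos.2 hlt
  have h := integral_two_mul_le_of_continuousOn hab hf continuousOn_const hL (g := fun _ => I)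
  have hlhs : ∫ x in a..b, 2 * f x * I = 2 * I * I := by
    rw [integral_mul_const, integral_const_mul]
  have hrhs : (b - a)⁻¹ * ∫ _ in a..b, I ^ 2 = I ^ 2 := by
    rw [integral_const, smul_eq_mul, ← mul_assoc, inv_mul_cancel₀ hL.ne', one_mul]
  rw [hlhs, hrhs] at h
  linarith

variable {E : Type*} [NormedAddCommGroup E] [NormedSpace ℝ E]

lemma norm_integral_sq_le_mul_integral_norm_sq (hab : a ≤ b) {f : ℝ → E}
    (hf : ContinuousOn f (Icc a b)) :
    ‖∫ x in a..b, f x‖ ^ 2 ≤ (b - a) * ∫ x in a..b, ‖f x‖ ^ 2 :=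
  (pow_le_pow_left₀ (norm_nonneg _) (norm_integral_le_integral_norm hab) 2).trans
    (sq_integral_le_mul_integral_sq hab hf.norm)

variable [CompleteSpace E]

lemma norm_sq_le_mul_integral_norm_deriv_sq {g g' : ℝ → E}
    (hg : ∀ x ∈ Icc a b, HasDerivWithinAt g (g' x) (Icc a b) x)
    (hg' : ContinuousOn g' (Icc a b)) (hga : g a = 0) {x : ℝ} (hx : x ∈ Icc a b) :
    ‖g x‖ ^ 2 ≤ (x - a) * ∫ t in a..x, ‖g' t‖ ^ 2 := by
  have hsub : Icc a x ⊆ Icc a b := Icc_subset_Icc_right hx.2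
  have hftc : ∫ t in a..x, g' t = g x := by
    rw [integral_eq_sub_of_hasDerivAt_of_le hx.1
      (fun t ht => (hg t (hsub ht)).continuousWithinAt.mono hsub)
      (fun t ht => (hg t (hsub (Ioo_subset_Icc_self ht))).hasDerivAt
        (Icc_mem_nhds ht.1 (ht.2.trans_le hx.2)))
      ((hg'.mono hsub).intervalIntegrable_of_Icc hx.1), hga, sub_zero]
  rw [← hftc]
  exact norm_integral_sq_le_mul_integral_norm_sq hx.1 (hg'.mono hsub)

lemma integral_norm_sq_le_of_eq_zero_left (hab : a ≤ b) {w w' w'' : ℝ → E}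
    (hw : ∀ x ∈ Icc a b, HasDerivWithinAt w (w' x) (Icc a b) x)
    (hw' : ∀ x ∈ Icc a b, HasDerivWithinAt w' (w'' x) (Icc a b) x)
    (hw'' : ContinuousOn w'' (Icc a b)) (hwa : w a = 0) (hw'a : w' a = 0) :
    ∫ x in a..b, ‖w x‖ ^ 2 ≤ (b - a) ^ 4 / 8 * ∫ x in a..b, ‖w'' x‖ ^ 2 := by
  set A := ∫ x in a..b, ‖w'' x‖ ^ 2
  have hwc : ContinuousOn w (Icc a b) := fun x hx => (hw x hx).continuousWithinAt
  have hw'c : ContinuousOn w' (Icc a b) := fun x hx => (hw' x hx).continuousWithinAt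
  have hw'_sq : ∀ t ∈ Icc a b, ‖w' t‖ ^ 2 ≤ (t - a) * A := fun t ht =>
    (norm_sq_le_mul_integral_norm_deriv_sq hw' hw'' hw'a ht).trans <|
      mul_le_mul_of_nonneg_left
        (integral_mono_interval le_rfl ht.1 ht.2
          (Filter.Eventually.of_forall fun _ => by positivity)
          ((hw''.norm.pow 2).intervalIntegrable_of_Icc hab))
        (sub_nonneg.2 ht.1)
  have hw_sq : ∀ x ∈ Icc a b, ‖w x‖ ^ 2 ≤ (x - a) ^ 3 / 2 * A := fun x hx => by
    have hsub : Icc a x ⊆ Icc a b := Icc_subset_Icc_right hx.2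
    calc ‖w x‖ ^ 2 ≤ (x - a) * ∫ t in a..x, ‖w' t‖ ^ 2 :=
          norm_sq_le_mul_integral_norm_deriv_sq hw hw'c hwa hx
      _ ≤ (x - a) * ∫ t in a..x, (t - a) * A := by
          refine mul_le_mul_of_nonneg_left ?_ (sub_nonneg.2 hx.1)
          refine integral_mono_on hx.1 ?_ ?_ fun t ht => hw'_sq t (hsub ht)
          · exact ((hw'c.mono hsub).norm.pow 2).intervalIntegrable_of_Icc hx.1
          · exact (by fun_prop : Continuous fun t => (t - a) * A).intervalIntegrable _ _
      _ = (x - a) ^ 3 / 2 * A := by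
          rw [integral_mul_const, integral_comp_sub_right (fun t => t), integral_id]
          ring
  calc ∫ x in a..b, ‖w x‖ ^ 2 ≤ ∫ x in a..b, (x - a) ^ 3 / 2 * A :=
        integral_mono_on hab ((hwc.norm.pow 2).intervalIntegrable_of_Icc hab)
          (Continuous.intervalIntegrable (by fun_prop) _ _) hw_sq
    _ = (b - a) ^ 4 / 8 * A := by
        rw [integral_mul_const, integral_div, integral_comp_sub_right (fun x => x ^ 3),
          integral_pow]
        ring

lemma integral_norm_sq_le_of_eq_zero_right (hab : a ≤ b) {w w' w'' : ℝ → E}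
    (hw : ∀ x ∈ Icc a b, HasDerivWithinAt w (w' x) (Icc a b) x)
    (hw' : ∀ x ∈ Icc a b, HasDerivWithinAt w' (w'' x) (Icc a b) x)
    (hw'' : ContinuousOn w'' (Icc a b)) (hwb : w b = 0) (hw'b : w' b = 0) :
    ∫ x in a..b, ‖w x‖ ^ 2 ≤ (b - a) ^ 4 / 8 * ∫ x in a..b, ‖w'' x‖ ^ 2 := by
  have hmaps : MapsTo (fun x => a + b - x) (Icc a b) (Icc a b) := fun x hx =>
    ⟨by linarith [hx.2], by linarith [hx.1]⟩
  have hrefl (x : ℝ) : HasDerivWithinAt (fun x => a + b - x) (-1) (Icc a b) x := by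
    simpa using (hasDerivWithinAt_id x _).const_sub (a + b)
  have hv (x) (hx : x ∈ Icc a b) :
      HasDerivWithinAt (fun x => w (a + b - x)) (-w' (a + b - x)) (Icc a b) x := by
    simpa [Function.comp_def] using (hw _ (hmaps hx)).scomp x (hrefl x) hmaps
  have hv' (x) (hx : x ∈ Icc a b) :
      HasDerivWithinAt (fun x => -w' (a + b - x)) (w'' (a + b - x)) (Icc a b) x := by
    simpa [Function.comp_def, Pi.neg_def] using ((hw' _ (hmaps hx)).scomp x (hrefl x) hmaps).neg
  have hreflect (f : ℝ → E) : ∫ x in a..b, ‖f (a + b - x)‖ ^ 2 = ∫ x in a..b, ‖f x‖ ^ 2 := by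
    simp [integral_comp_sub_left (fun x => ‖f x‖ ^ 2) (a + b)]
  simpa only [hreflect] using integral_norm_sq_le_of_eq_zero_left hab hv hv'
    (hw''.comp (by fun_prop) hmaps) (by simpa using hwb) (by simpa using hw'b)

lemma integral_add_integral_le_of_nonneg {c d : ℝ} (hab : a ≤ b) (hbc : b ≤ c) (hcd : c ≤ d)
    {f : ℝ → ℝ} (hf : ContinuousOn f (Icc a d)) (hf0 : ∀ x ∈ Icc b c, 0 ≤ f x) :
    (∫ x in a..b, f x) + ∫ x in c..d, f x ≤ ∫ x in a..d, f x := by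
  have hint {p q : ℝ} (hap : a ≤ p) (hpq : p ≤ q) (hqd : q ≤ d) :
      IntervalIntegrable f volume p q :=
    (hf.mono (Icc_subset_Icc hap hqd)).intervalIntegrable_of_Icc hpq
  rw [← integral_add_adjacent_intervals (hint le_rfl (hab.trans hbc) hcd)
      (hint (hab.trans hbc) hcd le_rfl),
    ← integral_add_adjacent_intervals (hint le_rfl hab (hbc.trans hcd)) (hint hab hbc hcd)]
  linarith [integral_nonneg (μ := volume) hbc hf0]

end

lemma integral_two_mul_re_mul_conj_le {a b C t : ℝ} (hab : a ≤ b) (hC : 0 < C) (ht : 0 < t)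
    {w θ v : ℝ → ℂ} (hw : ContinuousOn w (Icc a b)) (hθ : ContinuousOn θ (Icc a b))
    (hwv : ∫ x in a..b, ‖w x‖ ^ 2 ≤ C ^ 2 * ∫ x in a..b, ‖v x‖ ^ 2) :
    ∫ x in a..b, 2 * (w x * starRingEnd ℂ (θ x)).re ≤
      C * (t * (∫ x in a..b, ‖θ x‖ ^ 2) + t⁻¹ * ∫ x in a..b, ‖v x‖ ^ 2) := by
  have hCt : 0 < C * t := mul_pos hC ht
  calc ∫ x in a..b, 2 * (w x * starRingEnd ℂ (θ x)).re ≤ ∫ x in a..b, 2 * ‖θ x‖ * ‖w x‖ := by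
        refine integral_mono_on hab ?_ ?_ fun x _ => ?_
        · exact ContinuousOn.intervalIntegrable_of_Icc hab (by fun_prop)
        · exact ContinuousOn.intervalIntegrable_of_Icc hab (by fun_prop)
        · have := Complex.re_le_norm (w x * starRingEnd ℂ (θ x))
          rw [norm_mul, Complex.norm_conj] at this
          linarith
    _ ≤ C * t * (∫ x in a..b, ‖θ x‖ ^ 2) + (C * t)⁻¹ * ∫ x in a..b, ‖w x‖ ^ 2 :=
        integral_two_mul_le_of_continuousOn hab hθ.norm hw.norm hCt
    _ ≤ C * t * (∫ x in a..b, ‖θ x‖ ^ 2) + (C * t)⁻¹ * (C ^ 2 * ∫ x in a..b, ‖v x‖ ^ 2) := by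
        gcongr
    _ = C * (t * (∫ x in a..b, ‖θ x‖ ^ 2) + t⁻¹ * ∫ x in a..b, ‖v x‖ ^ 2) := by
        field_simp

lemma integral_mul_eq_of_boundary_layers {δ γ : ℝ} (hδ0 : 0 < δ) (hδ2 : δ ≤ 1 / 2)
    {σ f : ℝ → ℝ} (hσ : ∀ z ∈ Icc (0 : ℝ) 1, σ z = if z ≤ δ ∨ 1 - δ ≤ z then -γ else 0)
    (hf : ContinuousOn f (Icc 0 1)) :
    ∫ z in (0 : ℝ)..1, σ z * f z = -γ * ((∫ z in (0 : ℝ)..δ, f z) + ∫ z in (1 - δ)..1, f z) := by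
  have hσf (p q : ℝ) (hp : 0 ≤ p) (hq : q ≤ 1) {c : ℝ}
      (hc : ∀ z ∈ Ioo p q, (if z ≤ δ ∨ 1 - δ ≤ z then -γ else 0) = c) :
      EqOn (fun z => σ z * f z) (fun z => c * f z) (Ioo p q) := fun z hz => by
    simp only [hσ z ⟨hp.trans hz.1.le, hz.2.le.trans hq⟩, hc z hz]
  have hleft := hσf 0 δ le_rfl (by linarith) (c := -γ) fun z hz => if_pos (Or.inl hz.2.le)
  have hmid := hσf δ (1 - δ) hδ0.le (by linarith) (c := 0) fun z hz =>
    if_neg (by rintro (h | h) <;> linarith [hz.1, hz.2])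
  have hright := hσf (1 - δ) 1 (by linarith) le_rfl (c := -γ) fun z hz => if_pos (Or.inr hz.1.le)
  have hint {p q : ℝ} (hp : 0 ≤ p) (hpq : p ≤ q) (hq : q ≤ 1) (c : ℝ)
      (h : EqOn (fun z => σ z * f z) (fun z => c * f z) (Ioo p q)) :
      IntervalIntegrable (fun z => σ z * f z) volume p q :=
    (((hf.mono (Icc_subset_Icc hp hq)).intervalIntegrable_of_Icc hpq).const_mul c).congr_uIoo
      (by rw [uIoo_of_le hpq]; exact h.symm)
  have i₀ := hint le_rfl hδ0.le (by linarith) _ hleft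
  have i₁ := hint hδ0.le (by linarith) (by linarith) _ hmid
  have i₂ := hint (by linarith) (by linarith) le_rfl _ hright
  rw [← integral_add_adjacent_intervals (i₀.trans i₁) i₂, ← integral_add_adjacent_intervals i₀ i₁,
    integral_congr_Ioo_of_le hδ0.le hleft, integral_congr_Ioo_of_le (by linarith) hmid,
    integral_congr_Ioo_of_le (by linarith) hright]
  simp only [zero_mul, integral_zero, integral_const_mul]
  ring

lemma integral_boundary_layers_two_mul_re_mul_conj_le {δ t : ℝ} (hδ0 : 0 < δ) (hδ2 : δ ≤ 1 / 2)
    (ht : 0 < t) {w w' w'' θ : ℝ → ℂ}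
    (hw : ∀ z ∈ Icc (0 : ℝ) 1, HasDerivWithinAt w (w' z) (Icc 0 1) z)
    (hw' : ∀ z ∈ Icc (0 : ℝ) 1, HasDerivWithinAt w' (w'' z) (Icc 0 1) z)
    (hw'' : ContinuousOn w'' (Icc 0 1)) (hθ : ContinuousOn θ (Icc 0 1))
    (hw0 : w 0 = 0) (hw1 : w 1 = 0) (hw'0 : w' 0 = 0) (hw'1 : w' 1 = 0) :
    (∫ z in (0 : ℝ)..δ, 2 * (w z * starRingEnd ℂ (θ z)).re) +
        ∫ z in (1 - δ)..1, 2 * (w z * starRingEnd ℂ (θ z)).re ≤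
      δ ^ 2 / (2 * Real.sqrt 2) *
        (t * (∫ z in (0 : ℝ)..1, ‖θ z‖ ^ 2) + t⁻¹ * ∫ z in (0 : ℝ)..1, ‖w'' z‖ ^ 2) := by
  set C := δ ^ 2 / (2 * Real.sqrt 2)
  have hC : 0 < C := by positivity
  have hC2 : C ^ 2 = δ ^ 4 / 8 := by
    rw [div_pow, mul_pow, Real.sq_sqrt zero_le_two]
    ring
  have hwc : ContinuousOn w (Icc 0 1) := fun z hz => (hw z hz).continuousWithinAt
  have hrestrict {f f' : ℝ → ℂ} (hf : ∀ z ∈ Icc (0 : ℝ) 1, HasDerivWithinAt f (f' z) (Icc 0 1) z)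
      {p q : ℝ} (hp : 0 ≤ p) (hq : q ≤ 1) :
      ∀ z ∈ Icc p q, HasDerivWithinAt f (f' z) (Icc p q) z := fun z hz =>
    (hf z (Icc_subset_Icc hp hq hz)).mono (Icc_subset_Icc hp hq)
  have hlayer {p q : ℝ} (hp : 0 ≤ p) (hpq : p ≤ q) (hq : q ≤ 1) (hwidth : q - p = δ)
      (hpoincare : ∫ x in p..q, ‖w x‖ ^ 2 ≤ (q - p) ^ 4 / 8 * ∫ x in p..q, ‖w'' x‖ ^ 2) :
      ∫ x in p..q, 2 * (w x * starRingEnd ℂ (θ x)).re ≤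
        C * (t * (∫ x in p..q, ‖θ x‖ ^ 2) + t⁻¹ * ∫ x in p..q, ‖w'' x‖ ^ 2) :=
    integral_two_mul_re_mul_conj_le hpq hC ht (hwc.mono (Icc_subset_Icc hp hq))
      (hθ.mono (Icc_subset_Icc hp hq)) (by rwa [hC2, ← hwidth])
  have hlayer₀ := hlayer le_rfl hδ0.le (by linarith) (sub_zero δ)
    (integral_norm_sq_le_of_eq_zero_left hδ0.le (hrestrict hw le_rfl (by linarith))
      (hrestrict hw' le_rfl (by linarith)) (hw''.mono (Icc_subset_Icc le_rfl (by linarith)))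
      hw0 hw'0)
  have hlayer₁ := hlayer (by linarith) (by linarith) le_rfl (sub_sub_cancel 1 δ)
    (integral_norm_sq_le_of_eq_zero_right (by linarith) (hrestrict hw (by linarith) le_rfl)
      (hrestrict hw' (by linarith) le_rfl) (hw''.mono (Icc_subset_Icc (by linarith) le_rfl))
      hw1 hw'1)
  have hθ_sum := integral_add_integral_le_of_nonneg hδ0.le (by linarith : δ ≤ 1 - δ)
    (by linarith : 1 - δ ≤ 1) (f := fun z => ‖θ z‖ ^ 2) (by fun_prop) fun _ _ => by positivity
  have hw''_sum := integral_add_integral_le_of_nonneg hδ0.le (by linarith : δ ≤ 1 - δ)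
    (by linarith : 1 - δ ≤ 1) (f := fun z => ‖w'' z‖ ^ 2) (by fun_prop) fun _ _ => by positivity
  calc _ ≤ C * (t * ((∫ z in (0 : ℝ)..δ, ‖θ z‖ ^ 2) + ∫ z in (1 - δ)..1, ‖θ z‖ ^ 2) +
          t⁻¹ * ((∫ z in (0 : ℝ)..δ, ‖w'' z‖ ^ 2) + ∫ z in (1 - δ)..1, ‖w'' z‖ ^ 2)) := by
        linear_combination hlayer₀ + hlayer₁
    _ ≤ _ := by gcongr

theorem stmt_11_general (δ γ : ℝ) (hδ0 : 0 < δ) (hδ2 : δ ≤ 1/2) (hγ : 0 < γ)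
    (σ : ℝ → ℝ)
    (hσ : ∀ z ∈ Set.Icc (0:ℝ) 1, σ z = if z ≤ δ ∨ 1 - δ ≤ z then -γ else 0)
    (w w' w'' θ θ' : ℝ → ℂ)
    (hw : ∀ z ∈ Set.Icc (0:ℝ) 1, HasDerivWithinAt w (w' z) (Set.Icc 0 1) z)
    (hw' : ∀ z ∈ Set.Icc (0:ℝ) 1, HasDerivWithinAt w' (w'' z) (Set.Icc 0 1) z)
    (hw''c : ContinuousOn w'' (Set.Icc 0 1))
    (hθ : ∀ z ∈ Set.Icc (0:ℝ) 1, HasDerivWithinAt θ (θ' z) (Set.Icc 0 1) z)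
    (hw0 : w 0 = 0) (hw1 : w 1 = 0) (hw'0 : w' 0 = 0) (hw'1 : w' 1 = 0)
    (a₁ a₂ k : ℝ) (ha₁ : 0 < a₁) (ha₂ : 0 < a₂) (hk : 0 < k) :
    -(γ * δ^2 / (2 * Real.sqrt 2)) *
      (a₁ * (∫ z in (0:ℝ)..1, ‖w' z‖^2)
        + (1/a₁) * (∫ z in (0:ℝ)..1, ‖θ' z‖^2)
        + (a₂/k^2) * (∫ z in (0:ℝ)..1, ‖w'' z‖^2)
        + (k^2/a₂) * (∫ z in (0:ℝ)..1, ‖θ z‖^2))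
      ≤ ∫ z in (0:ℝ)..1, 2 * σ z * (w z * starRingEnd ℂ (θ z)).re := by
  have hwc : ContinuousOn w (Icc 0 1) := fun z hz => (hw z hz).continuousWithinAt
  have hθc : ContinuousOn θ (Icc 0 1) := fun z hz => (hθ z hz).continuousWithinAt
  have hlayers := integral_boundary_layers_two_mul_re_mul_conj_le hδ0 hδ2
    (by positivity : 0 < k ^ 2 / a₂) hw hw' hw''c hθc hw0 hw1 hw'0 hw'1
  rw [inv_div] at hlayers
  have hw'_sq := integral_nonneg (μ := volume) zero_le_one fun z _ => sq_nonneg ‖w' z‖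
  have hθ'_sq := integral_nonneg (μ := volume) zero_le_one fun z _ => sq_nonneg ‖θ' z‖
  have hrest : 0 ≤ a₁ * (∫ z in (0:ℝ)..1, ‖w' z‖ ^ 2) + 1 / a₁ * ∫ z in (0:ℝ)..1, ‖θ' z‖ ^ 2 := by
    positivity
  have hσR : ∫ z in (0:ℝ)..1, 2 * σ z * (w z * starRingEnd ℂ (θ z)).re =
      ∫ z in (0:ℝ)..1, σ z * (2 * (w z * starRingEnd ℂ (θ z)).re) :=
    integral_congr fun z _ => by ring
  rw [hσR, integral_mul_eq_of_boundary_layers hδ0 hδ2 hσ (by fun_prop)]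
  linear_combination mul_le_mul_of_nonneg_left hlayers hγ.le +
    mul_nonneg (mul_nonneg hγ.le (by positivity : 0 ≤ δ ^ 2 / (2 * Real.sqrt 2))) hrest

/-- Estimate on the indefinite cross term of the per-mode quadratic form:
∫₀¹ 2σ·Re(w·conj θ) ≥ −(γδ²/(2√2))[a₁∫|w'|² + (1/a₁)∫|θ'|² + (a₂/k²)∫|w''|² + (k²/a₂)∫|θ|²]. -/
theorem stmt_11 (δ γ : ℝ) (hδ0 : 0 < δ) (hδ2 : δ ≤ 1/2) (hγ : 0 < γ)
    (σ : ℝ → ℝ)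
    (hσ : ∀ z ∈ Set.Icc (0:ℝ) 1, σ z = if z ≤ δ ∨ 1 - δ ≤ z then -γ else 0)
    (w w' w'' θ θ' : ℝ → ℂ)
    (hw : ∀ z ∈ Set.Icc (0:ℝ) 1, HasDerivWithinAt w (w' z) (Set.Icc 0 1) z)
    (hw' : ∀ z ∈ Set.Icc (0:ℝ) 1, HasDerivWithinAt w' (w'' z) (Set.Icc 0 1) z)
    (hw''c : ContinuousOn w'' (Set.Icc 0 1))
    (hθ : ∀ z ∈ Set.Icc (0:ℝ) 1, HasDerivWithinAt θ (θ' z) (Set.Icc 0 1) z)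
    (hθ'c : ContinuousOn θ' (Set.Icc 0 1))
    (hw0 : w 0 = 0) (hw1 : w 1 = 0) (hw'0 : w' 0 = 0) (hw'1 : w' 1 = 0)
    (a₁ a₂ k : ℝ) (ha₁ : 0 < a₁) (ha₂ : 0 < a₂) (hk : 0 < k) :
    -(γ * δ^2 / (2 * Real.sqrt 2)) *
      (a₁ * (∫ z in (0:ℝ)..1, ‖w' z‖^2)
        + (1/a₁) * (∫ z in (0:ℝ)..1, ‖θ' z‖^2)
        + (a₂/k^2) * (∫ z in (0:ℝ)..1, ‖w'' z‖^2)
        + (k^2/a₂) * (∫ z in (0:ℝ)..1, ‖θ z‖^2))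
      ≤ ∫ z in (0:ℝ)..1, 2 * σ z * (w z * starRingEnd ℂ (θ z)).re :=
  stmt_11_general δ γ hδ0 hδ2 hγ σ hσ w w' w'' θ θ' hw hw' hw''c hθ hw0 hw1 hw'0 hw'1 a₁ a₂ k ha₁
    ha₂ hk
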